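/- Let x : ZMod 14 → ZMod 14 be an injective map such that x(i) is adjacent to x(i+1) in the Heawood graph for every i ∈ ZMod 14 (so that x enumerates the consecutive vertices of a 14-cycle). Then for every i ∈ ZMod 14, the vertex x(i) is adjacent in the Heawood graph to x(i+5) or to x(i-5). -/

import Mathlib

instance : DecidablePred (Even : ZMod 14 → Prop) :=
  fun i => decidable_of_iff (∃ r, i = r + r) Iff.rfl

instance : DecidablePred (Odd : ZMod 14 → Prop) :=
  fun i => decidable_of_iff (∃ r, i = 2 * r + 1) Iff.rfl

/-- The Heawood graph: the simple graph on vertex set `ZMod 14` in which distinct vertices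
`i` and `j` are adjacent iff `j = i + 1`, or `j = i - 1`, or (`i` is even and `j = i + 5`),
or (`i` is odd and `j = i - 5`). -/
def heawood : SimpleGraph (ZMod 14) where
  Adj i j := i ≠ j ∧ (j = i + 1 ∨ j = i - 1 ∨ (Even i ∧ j = i + 5) ∨ (Odd i ∧ j = i - 5))
  symm := ⟨by intro i j; revert i j; decide⟩
  loopless := ⟨by intro i; revert i; decide⟩

instance : DecidableRel heawood.Adj := fun i j =>
  inferInstanceAs (Decidable (i ≠ j ∧ (j = i + 1 ∨ j = i - 1 ∨ (Even i ∧ j = i + 5) ∨ (Odd i ∧ j = i - 5))))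

/-! ### A `Nat`-based DFS over all Hamiltonian cycles of the Heawood graph -/

def adjN (i j : Nat) : Bool :=
  (j == (i+1) % 14) || (j == (i+13) % 14) || (j == (i + cond (i % 2 == 0) 5 9) % 14)

def chordAux (p : Nat) : Nat → Bool :=
  Nat.rec true
    (fun i r => (adjN (p / 14^(13 - i % 14) % 14) (p / 14^(13 - (i+5) % 14) % 14)
      || adjN (p / 14^(13 - i % 14) % 14) (p / 14^(13 - (i+9) % 14) % 14)) && r)

def checkFrom (fuel : Nat) : Nat → Nat → Nat → Bool :=
  Nat.rec (motive := fun _ => Nat → Nat → Nat → Bool)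
    (fun cur _ path => !(adjN cur (path / 14^13 % 14)) || chordAux path 14)
    (fun _ ih cur mask path =>
      (Nat.testBit mask ((cur+1) % 14) || ih ((cur+1) % 14) (mask ||| (1 <<< ((cur+1) % 14))) (path * 14 + (cur+1) % 14)) &&
      (Nat.testBit mask ((cur+13) % 14) || ih ((cur+13) % 14) (mask ||| (1 <<< ((cur+13) % 14))) (path * 14 + (cur+13) % 14)) &&
      (Nat.testBit mask ((cur + cond (cur % 2 == 0) 5 9) % 14) || ih ((cur + cond (cur % 2 == 0) 5 9) % 14) (mask ||| (1 <<< ((cur + cond (cur % 2 == 0) 5 9) % 14))) (path * 14 + (cur + cond (cur % 2 == 0) 5 9) % 14)))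
    fuel

theorem checkFrom_succ (m c k p : Nat) : checkFrom (m+1) c k p =
      ((Nat.testBit k ((c+1) % 14) || checkFrom m ((c+1) % 14) (k ||| (1 <<< ((c+1) % 14))) (p * 14 + (c+1) % 14)) &&
      (Nat.testBit k ((c+13) % 14) || checkFrom m ((c+13) % 14) (k ||| (1 <<< ((c+13) % 14))) (p * 14 + (c+13) % 14)) &&
      (Nat.testBit k ((c + cond (c % 2 == 0) 5 9) % 14) || checkFrom m ((c + cond (c % 2 == 0) 5 9) % 14) (k ||| (1 <<< ((c + cond (c % 2 == 0) 5 9) % 14))) (p * 14 + (c + cond (c % 2 == 0) 5 9) % 14))) := rfl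

theorem checkFrom_zero (c k p : Nat) : checkFrom 0 c k p =
    (!(adjN c (p / 14^13 % 14)) || chordAux p 14) := rfl

theorem chordAux_succ (p i : Nat) : chordAux p (i+1) =
    ((adjN (p / 14^(13 - i % 14) % 14) (p / 14^(13 - (i+5) % 14) % 14)
      || adjN (p / 14^(13 - i % 14) % 14) (p / 14^(13 - (i+9) % 14) % 14)) && chordAux p i) := rfl

set_option maxHeartbeats 4000000 in
theorem key : ∀ v : Fin 14, checkFrom 13 v.val (1 <<< v.val) v.val = true := by decide

/-! ### Bridging lemmas between `heawood` and the `Nat` encoding -/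

theorem adj_imp_adjN : ∀ a b : ZMod 14, heawood.Adj a b → adjN a.val b.val = true := by decide

theorem adjN_imp_adj : ∀ a b : ZMod 14, adjN a.val b.val = true → heawood.Adj a b := by decide

theorem adj_nbr_cases : ∀ a b : ZMod 14, heawood.Adj a b →
    b.val = (a.val + 1) % 14 ∨ b.val = (a.val + 13) % 14 ∨
      b.val = (a.val + cond (a.val % 2 == 0) 5 9) % 14 := by decide

/-! ### Encoding the trajectory of `x` -/

def gfun (x : ZMod 14 → ZMod 14) (k : Nat) : Nat := (x k).val

def pathOf (x : ZMod 14 → ZMod 14) : Nat → Nat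
  | 0 => gfun x 0
  | n+1 => pathOf x n * 14 + gfun x (n+1)

def maskOf (x : ZMod 14 → ZMod 14) : Nat → Nat
  | 0 => 1 <<< gfun x 0
  | n+1 => maskOf x n ||| (1 <<< gfun x (n+1))

theorem gfun_lt (x : ZMod 14 → ZMod 14) (k : Nat) : gfun x k < 14 := ZMod.val_lt _

theorem pathOf_digit (x : ZMod 14 → ZMod 14) :
    ∀ n k, k ≤ n → pathOf x n / 14 ^ (n - k) % 14 = gfun x k := by
  intro n
  induction n with
  | zero => intro k hk; interval_cases k
            simp [pathOf, Nat.mod_eq_of_lt (gfun_lt x 0)]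
  | succ n ih =>
    intro k hk
    rcases Nat.lt_or_ge k (n+1) with h | h
    · have hk' : k ≤ n := Nat.lt_succ_iff.mp h
      have : n + 1 - k = (n - k) + 1 := by omega
      rw [this, pathOf, Nat.pow_succ, Nat.mul_comm (14 ^ (n-k)) 14,
        ← Nat.div_div_eq_div_mul]
      have : (pathOf x n * 14 + gfun x (n+1)) / 14 = pathOf x n := by
        rw [Nat.mul_comm, Nat.mul_add_div (by norm_num)]
        simp [Nat.div_eq_of_lt (gfun_lt x (n+1))]
      rw [this, ih k hk']
    · have : k = n + 1 := by omega
      subst this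
      have hg := gfun_lt x (n+1)
      simp only [pathOf, Nat.sub_self, Nat.pow_zero, Nat.div_one]
      omega

theorem maskOf_testBit (x : ZMod 14 → ZMod 14) :
    ∀ n w, Nat.testBit (maskOf x n) w = true → ∃ k, k ≤ n ∧ gfun x k = w := by
  intro n
  induction n with
  | zero =>
    intro w h
    rw [maskOf, Nat.shiftLeft_eq, one_mul, Nat.testBit_two_pow] at h
    exact ⟨0, le_refl 0, of_decide_eq_true h⟩
  | succ n ih =>
    intro w h
    rw [maskOf, Nat.testBit_or, Bool.or_eq_true] at h
    rcases h with h | h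
    · obtain ⟨k, hk, hg⟩ := ih w h
      exact ⟨k, Nat.le_succ_of_le hk, hg⟩
    · rw [Nat.shiftLeft_eq, one_mul, Nat.testBit_two_pow] at h
      exact ⟨n+1, le_refl _, of_decide_eq_true h⟩

/-! ### The main soundness argument -/

theorem natCast_val_self (i : ZMod 14) : ((i.val : Nat) : ZMod 14) = i :=
  ZMod.natCast_rightInverse i

/-- If `x` enumerates the consecutive vertices of a `14`-cycle of the Heawood graph, then each
`x i` is adjacent to `x (i + 5)` or to `x (i - 5)`. -/
theorem heawood_fourteen_cycle_chords (x : ZMod 14 → ZMod 14)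
    (hinj : Function.Injective x)
    (hadj : ∀ i : ZMod 14, heawood.Adj (x i) (x (i + 1))) :
    ∀ i : ZMod 14, heawood.Adj (x i) (x (i + 5)) ∨ heawood.Adj (x i) (x (i - 5)) := by
  -- the step invariant
  have step : ∀ n : Nat, n ≤ 13 →
      checkFrom (13 - n) (gfun x n) (maskOf x n) (pathOf x n) = true := by
    intro n
    induction n with
    | zero => intro _; exact key ⟨gfun x 0, gfun_lt x 0⟩
    | succ n ih =>
      intro hn
      have h := ih (by omega)
      have h13 : 13 - n = (13 - (n+1)) + 1 := by omega
      rw [h13, checkFrom_succ] at h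
      simp only [Bool.and_eq_true, Bool.or_eq_true] at h
      -- x (n+1) is a neighbour of x n
      have hadjn : heawood.Adj (x n) (x ((n : Nat) + 1 : Nat)) := by
        have := hadj (n : Nat)
        rwa [show (((n : Nat) : ZMod 14) + 1) = (((n : Nat) + 1 : Nat) : ZMod 14) by
          push_cast; ring] at this
      have hmem := adj_nbr_cases _ _ hadjn
      -- x (n+1) is not yet visited
      have hnotmem : Nat.testBit (maskOf x n) (gfun x (n+1)) = false := by
        by_contra hcon
        rw [Bool.not_eq_false] at hcon
        obtain ⟨k, hk, hg⟩ := maskOf_testBit x n _ hcon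
        have hxv : x (k : Nat) = x ((n+1 : Nat)) := by
          have := ZMod.val_injective (n := 14)
          exact this hg
        have := hinj hxv
        have hk14 : (k : ZMod 14).val = k := ZMod.val_cast_of_lt (by omega)
        have hn14 : ((n+1 : Nat) : ZMod 14).val = n+1 := ZMod.val_cast_of_lt (by omega)
        rw [← this] at hn14
        omega
      rcases hmem with hw | hw | hw
      · have hw' : gfun x (n+1) = (gfun x n + 1) % 14 := hw
        have hc := h.1.1
        rw [← hw'] at hc
        rcases hc with hc | hc
        · rw [hnotmem] at hc; exact absurd hc (by simp)
        · rw [pathOf, maskOf]; exact hc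
      · have hw' : gfun x (n+1) = (gfun x n + 13) % 14 := hw
        have hc := h.1.2
        rw [← hw'] at hc
        rcases hc with hc | hc
        · rw [hnotmem] at hc; exact absurd hc (by simp)
        · rw [pathOf, maskOf]; exact hc
      · have hw' : gfun x (n+1) = (gfun x n + cond (gfun x n % 2 == 0) 5 9) % 14 := hw
        have hc := h.2
        rw [← hw'] at hc
        rcases hc with hc | hc
        · rw [hnotmem] at hc; exact absurd hc (by simp)
        · rw [pathOf, maskOf]; exact hc
  -- at n = 13 the cycle closes, so the chord check holds
  have hfinal := step 13 (le_refl 13)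
  rw [show (13 - 13 : Nat) = 0 from rfl, checkFrom_zero] at hfinal
  have hclose : adjN (gfun x 13) (pathOf x 13 / 14 ^ 13 % 14) = true := by
    rw [show pathOf x 13 / 14 ^ 13 % 14 = pathOf x 13 / 14 ^ (13 - 0) % 14 from rfl,
      pathOf_digit x 13 0 (by omega)]
    apply adj_imp_adjN
    have := hadj ((13 : Nat) : ZMod 14)
    rwa [show (((13 : Nat) : ZMod 14) + 1) = ((0 : Nat) : ZMod 14) by decide] at this
  rw [hclose] at hfinal
  simp only [Bool.not_true, Bool.false_or] at hfinal
  -- extract the chord facts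
  have hchord : ∀ m, chordAux (pathOf x 13) m = true → ∀ i, i < m →
      (adjN (pathOf x 13 / 14^(13 - i % 14) % 14) (pathOf x 13 / 14^(13 - (i+5) % 14) % 14)
        || adjN (pathOf x 13 / 14^(13 - i % 14) % 14)
            (pathOf x 13 / 14^(13 - (i+9) % 14) % 14)) = true := by
    intro m
    induction m with
    | zero => intro _ i hi; omega
    | succ m ih =>
      intro hm i hi
      rw [chordAux_succ, Bool.and_eq_true] at hm
      rcases Nat.lt_or_ge i m with h | h
      · exact ih hm.2 i h
      · have : i = m := by omega
        subst this; exact hm.1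
  -- conclude
  intro i
  have hiv : i.val < 14 := ZMod.val_lt i
  have hci := hchord 14 hfinal i.val hiv
  have hd : ∀ j : Nat, j < 14 → pathOf x 13 / 14 ^ (13 - j % 14) % 14 = gfun x j := by
    intro j hj
    rw [Nat.mod_eq_of_lt hj]
    exact pathOf_digit x 13 j (by omega)
  have e1 : pathOf x 13 / 14 ^ (13 - i.val % 14) % 14 = gfun x i.val := by
    rw [show 13 - i.val % 14 = 13 - i.val % 14 from rfl]
    exact hd i.val hiv
  have e2 : pathOf x 13 / 14 ^ (13 - (i.val + 5) % 14) % 14 = gfun x ((i.val + 5) % 14) := by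
    have h5 : (i.val + 5) % 14 < 14 := Nat.mod_lt _ (by norm_num)
    have := hd ((i.val + 5) % 14) h5
    rwa [Nat.mod_eq_of_lt h5] at this
  have e3 : pathOf x 13 / 14 ^ (13 - (i.val + 9) % 14) % 14 = gfun x ((i.val + 9) % 14) := by
    have h9 : (i.val + 9) % 14 < 14 := Nat.mod_lt _ (by norm_num)
    have := hd ((i.val + 9) % 14) h9
    rwa [Nat.mod_eq_of_lt h9] at this
  rw [e1, e2, e3, Bool.or_eq_true] at hci
  have hxi : (x (i.val : Nat)) = x i := by rw [natCast_val_self]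
  have hplus : ((((i.val + 5) % 14 : Nat)) : ZMod 14) = i + 5 := by
    rw [ZMod.natCast_mod]; push_cast [natCast_val_self]; ring
  have hminus : ((((i.val + 9) % 14 : Nat)) : ZMod 14) = i - 5 := by
    rw [ZMod.natCast_mod]; push_cast [natCast_val_self]
    have : (9 : ZMod 14) = -5 := by decide
    rw [this]; ring
  rcases hci with hc | hc
  · left
    have := adjN_imp_adj _ _ hc
    rwa [hxi, hplus] at this
  · right
    have := adjN_imp_adj _ _ hc
    rwa [hxi, hminus] at this
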